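/- arXiv:2311.00778 — 5 statements merged into one kernel-verified Lean document; each statement's English description precedes it below -/
import Mathlib

section
/- Let A¹ and A² be nonempty finite sets, R¹ ∈ ℝ^{A¹×A²}, R² ∈ ℝ^{A²×A¹}, and τ¹, τ² ≥ 0. Let r̲ and r̄ denote, respectively, the minimum and maximum entries of the matrix R¹ + (R²)ᵀ. Then r̲ ≤ val̄¹(R¹) + val̄²(R²) ≤ r̄. -/
open Finset

noncomputable instance stdSimplexNonempty {A : Type*} [Fintype A] [Nonempty A] :
    Nonempty (stdSimplex ℝ A) := by
  classical
  exact ⟨⟨Pi.single (Classical.arbitrary A) 1, single_mem_stdSimplex ℝ _⟩⟩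

/-- Expected payoff `μᵀ R ν` of the matrix game `R` under mixed strategies `μ, ν`. -/
noncomputable def pay {A B : Type*} [Fintype A] [Fintype B]
    (R : A → B → ℝ) (μ : A → ℝ) (ν : B → ℝ) : ℝ :=
  ∑ a, ∑ b, μ a * R a b * ν b

/-- Shannon entropy `H(μ) = -∑ μ(a) log μ(a)` (note `Real.log 0 = 0` in Mathlib). -/
noncomputable def entropy {A : Type*} [Fintype A] (μ : A → ℝ) : ℝ :=
  -∑ a, μ a * Real.log (μ a)

/-- The zero-sum matrix-game value `val(R) = max_{μ∈Δ(A)} min_{ν∈Δ(B)} μᵀ R ν`. -/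
noncomputable def matVal {A B : Type*} [Fintype A] [Fintype B] [Nonempty A] [Nonempty B]
    (R : A → B → ℝ) : ℝ :=
  ⨆ μ : stdSimplex ℝ A, ⨅ ν : stdSimplex ℝ B, pay R μ.1 ν.1

/-- The entropy-regularized value
`val̄(R) = max_{μ∈Δ(A)} min_{ν∈Δ(B)} { μᵀ R ν + τ₁ H(μ) - τ₂ H(ν) }`. -/
noncomputable def regVal {A B : Type*} [Fintype A] [Fintype B] [Nonempty A] [Nonempty B]
    (τ1 τ2 : ℝ) (R : A → B → ℝ) : ℝ :=
  ⨆ μ : stdSimplex ℝ A, ⨅ ν : stdSimplex ℝ B,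
    pay R μ.1 ν.1 + τ1 * entropy μ.1 - τ2 * entropy ν.1

/-- Softmax (smoothed best response) with temperature `τ`. -/
noncomputable def softmax {A : Type*} [Fintype A] (τ : ℝ) (q : A → ℝ) : A → ℝ :=
  fun a => Real.exp (q a / τ) / ∑ b, Real.exp (q b / τ)

/-- Maximum norm of a matrix: the maximum of the absolute values of its entries. -/
noncomputable def matMaxNorm {A B : Type*} [Fintype A] [Fintype B] [Nonempty A] [Nonempty B]
    (M : A → B → ℝ) : ℝ :=
  (Finset.univ (α := A × B)).sup' univ_nonempty (fun ab => |M ab.1 ab.2|)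

/-- Sup norm of a vector. -/
noncomputable def vecSupNorm {A : Type*} [Fintype A] [Nonempty A] (q : A → ℝ) : ℝ :=
  Finset.univ.sup' univ_nonempty (fun a => |q a|)

/-! Since `τ¹, τ² ≥ 0`, each regularized game is concave in the maximizer's mixed strategy and
convex in the minimizer's, so by Sion's minimax theorem it has a saddle point, whose payoff is
`val̄ⁱ`. Let `(μ₁, ν₁)` and `(μ₂, ν₂)` in `Δ(A¹) × Δ(A²)` be saddle points of games 1 and 2. Then
`val̄¹` dominates the payoff of game 1 at `(μ₂, ν₁)` and `val̄²` that of game 2 at `(ν₁, μ₂)`; in the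
sum of these payoffs the entropy terms cancel, leaving `μ₂ᵀ (R¹ + (R²)ᵀ) ν₁ ≥ r̲`. Symmetrically,
`val̄¹ + val̄² ≤ μ₁ᵀ (R¹ + (R²)ᵀ) ν₂ ≤ r̄`. -/

section Payoff

variable {A B : Type*} [Fintype A] [Fintype B]

theorem pay_swap (R : B → A → ℝ) (μ : A → ℝ) (ν : B → ℝ) :
    pay R ν μ = pay (fun a b => R b a) μ ν := by
  unfold pay
  rw [Finset.sum_comm]
  exact sum_congr rfl fun a _ => sum_congr rfl fun b _ => by ring

theorem pay_add (R S : A → B → ℝ) (μ : A → ℝ) (ν : B → ℝ) :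
    pay (fun a b => R a b + S a b) μ ν = pay R μ ν + pay S μ ν := by
  simp only [pay, mul_add, add_mul, sum_add_distrib]

theorem pay_neg (R : A → B → ℝ) (μ : A → ℝ) (ν : B → ℝ) :
    pay (fun a b => -R a b) μ ν = -pay R μ ν := by
  simp only [pay, mul_neg, neg_mul, sum_neg_distrib]

theorem pay_smul_add_smul_left (R : A → B → ℝ) (x y : A → ℝ) (ν : B → ℝ) (s t : ℝ) :
    pay R (s • x + t • y) ν = s * pay R x ν + t * pay R y ν := by
  simp only [pay, Pi.add_apply, Pi.smul_apply, smul_eq_mul, mul_sum, ← sum_add_distrib]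
  exact sum_congr rfl fun a _ => sum_congr rfl fun b _ => by ring

theorem le_pay_of_forall_le {S : A → B → ℝ} {c : ℝ} (h : ∀ a b, c ≤ S a b) {μ : A → ℝ}
    {ν : B → ℝ} (hμ : μ ∈ stdSimplex ℝ A) (hν : ν ∈ stdSimplex ℝ B) : c ≤ pay S μ ν :=
  calc c = ∑ a, ∑ b, μ a * c * ν b := by simp [← mul_sum, ← sum_mul, hμ.2, hν.2]
    _ ≤ pay S μ ν := sum_le_sum fun a _ => sum_le_sum fun b _ =>
      mul_le_mul_of_nonneg_right (mul_le_mul_of_nonneg_left (h a b) (hμ.1 a)) (hν.1 b)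

theorem pay_le_of_forall_le {S : A → B → ℝ} {c : ℝ} (h : ∀ a b, S a b ≤ c) {μ : A → ℝ}
    {ν : B → ℝ} (hμ : μ ∈ stdSimplex ℝ A) (hν : ν ∈ stdSimplex ℝ B) : pay S μ ν ≤ c := by
  simpa [pay_neg] using
    le_pay_of_forall_le (S := fun a b => -S a b) (fun a b => neg_le_neg (h a b)) hμ hν

end Payoff

section Entropy

variable {A : Type*} [Fintype A]

theorem entropy_eq_sum_negMulLog (μ : A → ℝ) : entropy μ = ∑ a, Real.negMulLog (μ a) := by
  simp [entropy, Real.negMulLog]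

@[fun_prop]
theorem continuous_entropy : Continuous (entropy (A := A)) := by
  simp only [funext entropy_eq_sum_negMulLog]
  fun_prop

theorem concaveOn_entropy : ConcaveOn ℝ (Set.Ici 0) (entropy (A := A)) := by
  refine ⟨convex_Ici 0, fun x hx y hy s t hs ht hst => ?_⟩
  simp only [entropy_eq_sum_negMulLog, smul_eq_mul, mul_sum, ← sum_add_distrib, Pi.add_apply,
    Pi.smul_apply]
  exact sum_le_sum fun a _ => Real.concaveOn_negMulLog.2 (hx a) (hy a) hs ht hst

end Entropy

noncomputable def regPay {A B : Type*} [Fintype A] [Fintype B] (τ1 τ2 : ℝ) (R : A → B → ℝ)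
    (μ : A → ℝ) (ν : B → ℝ) : ℝ :=
  pay R μ ν + τ1 * entropy μ - τ2 * entropy ν

section RegularizedGame

variable {A B : Type*} [Fintype A] [Fintype B]

theorem concaveOn_pay_add_mul_entropy (R : A → B → ℝ) (ν : B → ℝ) {τ : ℝ} (hτ : 0 ≤ τ) :
    ConcaveOn ℝ (stdSimplex ℝ A) fun μ => pay R μ ν + τ * entropy μ := by
  refine ⟨convex_stdSimplex ℝ A, fun x hx y hy s t hs ht hst => ?_⟩
  have hH := concaveOn_entropy.2 (Set.mem_Ici.2 hx.1) (Set.mem_Ici.2 hy.1) hs ht hst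
  simp only [smul_eq_mul] at hH ⊢
  rw [pay_smul_add_smul_left]
  nlinarith [mul_le_mul_of_nonneg_left hH hτ]

theorem concaveOn_regPay_left (τ1 τ2 : ℝ) (hτ1 : 0 ≤ τ1) (R : A → B → ℝ) (ν : B → ℝ) :
    ConcaveOn ℝ (stdSimplex ℝ A) fun μ => regPay τ1 τ2 R μ ν :=
  (concaveOn_pay_add_mul_entropy R ν hτ1).sub (convexOn_const _ (convex_stdSimplex ℝ A))

theorem convexOn_regPay_right (τ1 τ2 : ℝ) (hτ2 : 0 ≤ τ2) (R : A → B → ℝ) (μ : A → ℝ) :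
    ConvexOn ℝ (stdSimplex ℝ B) fun ν => regPay τ1 τ2 R μ ν := by
  rw [← neg_concaveOn_iff]
  convert (concaveOn_pay_add_mul_entropy (fun b a => -R a b) μ hτ2).sub
    (convexOn_const (τ1 * entropy μ) (convex_stdSimplex ℝ B)) using 1
  ext ν
  simp only [regPay, Pi.neg_apply, Pi.sub_apply]
  rw [pay_swap (fun b a => -R a b) μ ν, pay_neg]
  ring

theorem continuous_regPay_left (τ1 τ2 : ℝ) (R : A → B → ℝ) (ν : B → ℝ) :
    Continuous fun μ => regPay τ1 τ2 R μ ν := by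
  unfold regPay pay
  fun_prop

theorem continuous_regPay_right (τ1 τ2 : ℝ) (R : A → B → ℝ) (μ : A → ℝ) :
    Continuous fun ν => regPay τ1 τ2 R μ ν := by
  unfold regPay pay
  fun_prop

end RegularizedGame

theorem ciSup_ciInf_eq_of_saddle {α ι κ : Type*} [ConditionallyCompleteLattice α] [Nonempty ι]
    [Nonempty κ] {f : ι → κ → α} (hf : ∀ i, BddBelow (Set.range (f i))) {i₀ : ι} {j₀ : κ}
    (hsaddle : ∀ i j, f i j₀ ≤ f i₀ j) : ⨆ i, ⨅ j, f i j = f i₀ j₀ := by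
  have hinf : ∀ i, ⨅ j, f i j ≤ f i₀ j₀ := fun i => (ciInf_le (hf i) j₀).trans (hsaddle i j₀)
  refine le_antisymm (ciSup_le hinf) ?_
  exact (le_ciInf fun j => hsaddle i₀ j).trans
    (le_ciSup ⟨f i₀ j₀, Set.forall_mem_range.2 hinf⟩ i₀)

section RegularizedValue

variable {A B : Type*} [Fintype A] [Fintype B] [Nonempty A] [Nonempty B]

theorem exists_isSaddlePointOn_regPay {τ1 τ2 : ℝ} (hτ1 : 0 ≤ τ1) (hτ2 : 0 ≤ τ2)
    (R : A → B → ℝ) : ∃ ν ∈ stdSimplex ℝ B, ∃ μ ∈ stdSimplex ℝ A,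
      IsSaddlePointOn (stdSimplex ℝ B) (stdSimplex ℝ A) (fun ν μ => regPay τ1 τ2 R μ ν) ν μ :=
  Sion.exists_isSaddlePointOn .of_subtype (convex_stdSimplex ℝ B)
    (isCompact_stdSimplex ℝ B)
    (fun μ _ => (continuous_regPay_right τ1 τ2 R μ).continuousOn.lowerSemicontinuousOn)
    (fun μ _ => (convexOn_regPay_right τ1 τ2 hτ2 R μ).quasiconvexOn)
    (convex_stdSimplex ℝ A) .of_subtype (isCompact_stdSimplex ℝ A)
    (fun ν _ => (continuous_regPay_left τ1 τ2 R ν).continuousOn.upperSemicontinuousOn)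
    (fun ν _ => (concaveOn_regPay_left τ1 τ2 hτ1 R ν).quasiconcaveOn)

theorem exists_saddlePoint_regVal {τ1 τ2 : ℝ} (hτ1 : 0 ≤ τ1) (hτ2 : 0 ≤ τ2)
    (R : A → B → ℝ) : ∃ μ ∈ stdSimplex ℝ A, ∃ ν ∈ stdSimplex ℝ B,
      (∀ μ' ∈ stdSimplex ℝ A, regPay τ1 τ2 R μ' ν ≤ regVal τ1 τ2 R) ∧
      ∀ ν' ∈ stdSimplex ℝ B, regVal τ1 τ2 R ≤ regPay τ1 τ2 R μ ν' := by
  obtain ⟨ν, hν, μ, hμ, hsaddle⟩ := exists_isSaddlePointOn_regPay hτ1 hτ2 R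
  have hbdd (μ' : stdSimplex ℝ A) :
      BddBelow (Set.range fun ν' : stdSimplex ℝ B => regPay τ1 τ2 R μ'.1 ν'.1) := by
    rw [← Set.image_eq_range]
    exact (isCompact_stdSimplex ℝ B).bddBelow_image
      (continuous_regPay_right τ1 τ2 R μ').continuousOn
  have hval : regVal τ1 τ2 R = regPay τ1 τ2 R μ ν :=
    ciSup_ciInf_eq_of_saddle hbdd (i₀ := ⟨μ, hμ⟩) (j₀ := ⟨ν, hν⟩)
      fun μ' ν' => hsaddle ν' ν'.2 μ' μ'.2
  exact ⟨μ, hμ, ν, hν, fun μ' hμ' => hval ▸ hsaddle ν hν μ' hμ',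
    fun ν' hν' => hval ▸ hsaddle ν' hν' μ hμ⟩

end RegularizedValue

theorem regPay_add_regPay_swap {A B : Type*} [Fintype A] [Fintype B] (τ1 τ2 : ℝ)
    (R1 : A → B → ℝ) (R2 : B → A → ℝ) (μ : A → ℝ) (ν : B → ℝ) :
    regPay τ1 τ2 R1 μ ν + regPay τ2 τ1 R2 ν μ = pay (fun a b => R1 a b + R2 b a) μ ν := by
  rw [regPay, regPay, pay_add, pay_swap R2]
  ring

theorem stmt_1 {A1 A2 : Type*} [Fintype A1] [Fintype A2] [Nonempty A1] [Nonempty A2]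
    (R1 : A1 → A2 → ℝ) (R2 : A2 → A1 → ℝ) (τ1 τ2 : ℝ) (hτ1 : 0 ≤ τ1) (hτ2 : 0 ≤ τ2) :
    (Finset.univ (α := A1 × A2)).inf' univ_nonempty
        (fun ab => R1 ab.1 ab.2 + R2 ab.2 ab.1)
      ≤ regVal τ1 τ2 R1 + regVal τ2 τ1 R2 ∧
    regVal τ1 τ2 R1 + regVal τ2 τ1 R2 ≤
      (Finset.univ (α := A1 × A2)).sup' univ_nonempty
        (fun ab => R1 ab.1 ab.2 + R2 ab.2 ab.1) := by
  obtain ⟨μ1, hμ1, ν1, hν1, hle1, hge1⟩ := exists_saddlePoint_regVal hτ1 hτ2 R1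
  obtain ⟨ν2, hν2, μ2, hμ2, hle2, hge2⟩ := exists_saddlePoint_regVal hτ2 hτ1 R2
  constructor
  · calc _ ≤ pay (fun a b => R1 a b + R2 b a) μ2 ν1 :=
          le_pay_of_forall_le (fun a b => inf'_le _ (mem_univ (a, b))) hμ2 hν1
      _ = regPay τ1 τ2 R1 μ2 ν1 + regPay τ2 τ1 R2 ν1 μ2 := (regPay_add_regPay_swap ..).symm
      _ ≤ _ := add_le_add (hle1 μ2 hμ2) (hle2 ν1 hν1)
  · calc _ ≤ regPay τ1 τ2 R1 μ1 ν2 + regPay τ2 τ1 R2 ν2 μ1 :=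
          add_le_add (hge1 ν2 hν2) (hge2 μ1 hμ1)
      _ = pay (fun a b => R1 a b + R2 b a) μ1 ν2 := regPay_add_regPay_swap ..
      _ ≤ _ := pay_le_of_forall_le
          (fun a b => le_sup' (fun ab : A1 × A2 => R1 ab.1 ab.2 + R2 ab.2 ab.1) (mem_univ (a, b)))
          hμ1 hν2
end

section
/- Let A be a nonempty finite set and τ > 0. The softmax map with temperature τ is (1/τ)-Lipschitz continuous: for all q, q' ∈ ℝ^A, ‖softmax_τ(q) − softmax_τ(q')‖₂ ≤ (1/τ)·‖q − q'‖₂. -/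
open Finset

/-!
Along the segment `t ↦ q' + t (q - q')` the derivative of softmax is `τ⁻¹ (diag p - p pᵀ) u`,
where `p` is the current softmax value and `u = q - q'`. Its `a`-th entry is `p a (u a - 𝔼_p u)`;
since `p a ≤ 1` its square is at most `p a (u a - 𝔼_p u)²`, and summing gives
`Var_p u ≤ 𝔼_p u² ≤ ‖u‖²`. The mean value inequality then yields the Lipschitz bound.
-/
section

variable {A : Type*} [Fintype A]

lemma softmax_nonneg (τ : ℝ) (q : A → ℝ) (a : A) : 0 ≤ softmax τ q a := by
  unfold softmax
  positivity

lemma sum_softmax [Nonempty A] (τ : ℝ) (q : A → ℝ) : ∑ a, softmax τ q a = 1 := by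
  have hZ : 0 < ∑ b, Real.exp (q b / τ) := sum_pos (fun b _ => Real.exp_pos _) univ_nonempty
  simp only [softmax, ← sum_div, div_self hZ.ne']

lemma sum_mul_sub_weightedMean_sq {p : A → ℝ} (hp1 : ∑ a, p a = 1) (u : A → ℝ) :
    ∑ a, p a * (u a - ∑ b, p b * u b) ^ 2 = ∑ a, p a * u a ^ 2 - (∑ b, p b * u b) ^ 2 := by
  set m := ∑ b, p b * u b
  calc ∑ a, p a * (u a - m) ^ 2 = ∑ a, (p a * u a ^ 2 - 2 * m * (p a * u a) + m ^ 2 * p a) :=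
        sum_congr rfl fun a _ => by ring
    _ = ∑ a, p a * u a ^ 2 - 2 * m * m + m ^ 2 * ∑ a, p a := by
        rw [sum_add_distrib, sum_sub_distrib, ← mul_sum, ← mul_sum]
    _ = ∑ a, p a * u a ^ 2 - m ^ 2 := by rw [hp1]; ring

lemma norm_mul_sub_weightedMean_le {p : A → ℝ} (hp0 : ∀ a, 0 ≤ p a) (hp1 : ∑ a, p a = 1)
    (u : A → ℝ) :
    ‖WithLp.toLp 2 (fun a => p a * (u a - ∑ b, p b * u b))‖ ≤ ‖WithLp.toLp 2 u‖ := by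
  set m := ∑ b, p b * u b
  have hp_le_one (a : A) : p a ≤ 1 := hp1 ▸ single_le_sum (fun b _ => hp0 b) (mem_univ a)
  have hsq : ∑ a, (p a * (u a - m)) ^ 2 ≤ ∑ a, u a ^ 2 :=
    calc ∑ a, (p a * (u a - m)) ^ 2 ≤ ∑ a, p a * (u a - m) ^ 2 :=
          sum_le_sum fun a _ => by
            rw [mul_pow, sq (p a)]
            exact mul_le_mul_of_nonneg_right
              (mul_le_of_le_one_left (hp0 a) (hp_le_one a)) (sq_nonneg _)
      _ = ∑ a, p a * u a ^ 2 - m ^ 2 := sum_mul_sub_weightedMean_sq hp1 u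
      _ ≤ ∑ a, u a ^ 2 := by
          have : ∑ a, p a * u a ^ 2 ≤ ∑ a, u a ^ 2 :=
            sum_le_sum fun a _ => mul_le_of_le_one_left (sq_nonneg _) (hp_le_one a)
          nlinarith [sq_nonneg m]
  simpa only [EuclideanSpace.norm_eq, Real.norm_eq_abs, sq_abs] using Real.sqrt_le_sqrt hsq

lemma hasDerivAt_softmax_line [Nonempty A] (τ : ℝ) (q u : A → ℝ) (t : ℝ) (a : A) :
    HasDerivAt (fun s : ℝ => softmax τ (q + s • u) a)
      (softmax τ (q + t • u) a * (u a - ∑ b, softmax τ (q + t • u) b * u b) / τ) t := by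
  have hexp (b : A) : HasDerivAt (fun s : ℝ => Real.exp ((q + s • u) b / τ))
      (Real.exp ((q + t • u) b / τ) * (u b / τ)) t := by
    simpa using ((((hasDerivAt_id t).mul_const (u b)).const_add (q b)).div_const τ).exp
  have hZ : 0 < ∑ b, Real.exp ((q + t • u) b / τ) :=
    sum_pos (fun b _ => Real.exp_pos _) univ_nonempty
  refine ((hexp a).div (HasDerivAt.fun_sum fun b _ => hexp b) hZ.ne').congr_deriv ?_
  simp only [softmax, div_mul_eq_mul_div, ← sum_div, mul_div_assoc']
  field_simp

lemma hasDerivAt_toLp_softmax_line [Nonempty A] (τ : ℝ) (q u : A → ℝ) (t : ℝ) :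
    HasDerivAt (fun s : ℝ => WithLp.toLp 2 (softmax τ (q + s • u)))
      (τ⁻¹ • WithLp.toLp 2 (fun a => softmax τ (q + t • u) a *
        (u a - ∑ b, softmax τ (q + t • u) b * u b))) t := by
  have hpi := hasDerivAt_pi.2 fun a => hasDerivAt_softmax_line τ q u t a
  refine ((EuclideanSpace.equiv A ℝ).symm.toContinuousLinearMap.hasFDerivAt.comp_hasDerivAt t
    hpi).congr_deriv ?_
  ext a
  simp [div_eq_inv_mul]

theorem norm_toLp_softmax_sub_le [Nonempty A] {τ : ℝ} (hτ : 0 < τ) (q q' : A → ℝ) :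
    ‖WithLp.toLp 2 (softmax τ q) - WithLp.toLp 2 (softmax τ q')‖ ≤
      τ⁻¹ * ‖WithLp.toLp 2 (q - q')‖ := by
  have hderiv := hasDerivAt_toLp_softmax_line τ q' (q - q')
  have hbound (t : ℝ) : ‖τ⁻¹ • WithLp.toLp 2 (fun a => softmax τ (q' + t • (q - q')) a *
      ((q - q') a - ∑ b, softmax τ (q' + t • (q - q')) b * (q - q') b))‖ ≤
        τ⁻¹ * ‖WithLp.toLp 2 (q - q')‖ := by
    rw [norm_smul, Real.norm_of_nonneg (inv_nonneg.2 hτ.le)]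
    exact mul_le_mul_of_nonneg_left
      (norm_mul_sub_weightedMean_le (softmax_nonneg τ _) (sum_softmax τ _) _)
      (inv_nonneg.2 hτ.le)
  simpa using norm_image_sub_le_of_norm_deriv_le_segment_01'
    (fun t _ => (hderiv t).hasDerivWithinAt) (fun t _ => hbound t)

end

theorem stmt_7 {A : Type*} [Fintype A] [Nonempty A] (τ : ℝ) (hτ : 0 < τ) (q q' : A → ℝ) :
    Real.sqrt (∑ a, (softmax τ q a - softmax τ q' a) ^ 2) ≤
      (1 / τ) * Real.sqrt (∑ a, (q a - q' a) ^ 2) := by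
  simpa only [EuclideanSpace.norm_eq, Real.norm_eq_abs, sq_abs, one_div, WithLp.toLp_sub,
    PiLp.sub_apply, Pi.sub_apply] using norm_toLp_softmax_sub_le hτ q q'
end

section
/- Let A¹ and A² be nonempty finite sets, R ∈ ℝ^{A¹×A²}, and τ¹, τ² ≥ 0. Define L(q, π) := max_{μ∈Δ(A¹)} { μᵀq + τ¹H(μ) − τ²H(π) } + ‖q − Rπ‖₂ − val̄(R) for q ∈ ℝ^{A¹} and π ∈ Δ(A²). Then L(q, π) ≥ 0 for all q ∈ ℝ^{A¹} and all π ∈ Δ(A²). -/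
open Finset

lemma aux_negMulLog_le_one {x : ℝ} (hx : 0 ≤ x) : -(x * Real.log x) ≤ 1 := by
  rcases eq_or_lt_of_le hx with h | h
  · simp [← h]
  · have hlog : Real.log x⁻¹ ≤ x⁻¹ - 1 := Real.log_le_sub_one_of_pos (by positivity)
    have : -(x * Real.log x) = x * Real.log x⁻¹ := by
      rw [Real.log_inv]; ring
    rw [this]
    calc x * Real.log x⁻¹ ≤ x * (x⁻¹ - 1) := by
          exact mul_le_mul_of_nonneg_left hlog hx
      _ = 1 - x := by field_simp
      _ ≤ 1 := by linarith

lemma aux_entropy_le_card {A : Type*} [Fintype A] {μ : A → ℝ} (h : ∀ a, 0 ≤ μ a) :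
    entropy μ ≤ Fintype.card A := by
  unfold entropy
  rw [neg_le]
  calc -(Fintype.card A : ℝ) ≤ -∑ a : A, (1:ℝ) := by
        simp
    _ ≤ ∑ a, μ a * Real.log (μ a) := by
        rw [← Finset.sum_neg_distrib]
        apply Finset.sum_le_sum
        intro a _
        have := aux_negMulLog_le_one (h a)
        linarith

lemma aux_entropy_nonneg {A : Type*} [Fintype A] {μ : A → ℝ} (h : μ ∈ stdSimplex ℝ A) :
    0 ≤ entropy μ := by
  unfold entropy
  rw [le_neg, neg_zero]
  apply Finset.sum_nonpos
  intro a _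
  have h1 : μ a ≤ 1 := by
    have := h.2
    calc μ a ≤ ∑ b, μ b := Finset.single_le_sum (fun b _ => h.1 b) (Finset.mem_univ a)
      _ = 1 := h.2
  have : Real.log (μ a) ≤ 0 := Real.log_nonpos (h.1 a) h1
  exact mul_nonpos_of_nonneg_of_nonpos (h.1 a) this

lemma aux_simplex_le_one {A : Type*} [Fintype A] {μ : A → ℝ} (h : μ ∈ stdSimplex ℝ A)
    (a : A) : μ a ≤ 1 := by
  calc μ a ≤ ∑ b, μ b := Finset.single_le_sum (fun b _ => h.1 b) (Finset.mem_univ a)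
    _ = 1 := h.2

lemma aux_pay_lb {A B : Type*} [Fintype A] [Fintype B] (R : A → B → ℝ)
    {μ : A → ℝ} {ν : B → ℝ} (hμ : μ ∈ stdSimplex ℝ A) (hν : ν ∈ stdSimplex ℝ B) :
    -∑ a, ∑ b, |R a b| ≤ pay R μ ν := by
  unfold pay
  rw [← Finset.sum_neg_distrib]
  apply Finset.sum_le_sum
  intro a _
  rw [← Finset.sum_neg_distrib]
  apply Finset.sum_le_sum
  intro b _
  have h1 : |μ a * R a b * ν b| ≤ |R a b| := by
    rw [abs_mul, abs_mul, abs_of_nonneg (hμ.1 a), abs_of_nonneg (hν.1 b)]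
    calc μ a * |R a b| * ν b ≤ 1 * |R a b| * 1 := by
          apply mul_le_mul (mul_le_mul (aux_simplex_le_one hμ a) le_rfl (abs_nonneg _)
            zero_le_one) (aux_simplex_le_one hν b) (hν.1 b) (by positivity)
      _ = |R a b| := by ring
  have := neg_abs_le (μ a * R a b * ν b)
  linarith

theorem stmt_8 {A1 A2 : Type*} [Fintype A1] [Fintype A2] [Nonempty A1] [Nonempty A2]
    (R : A1 → A2 → ℝ) (τ1 τ2 : ℝ) (hτ1 : 0 ≤ τ1) (hτ2 : 0 ≤ τ2)
    (q : A1 → ℝ) (π : A2 → ℝ) (hπ : π ∈ stdSimplex ℝ A2) :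
    0 ≤ (⨆ μ : stdSimplex ℝ A1, (∑ a, μ.1 a * q a) + τ1 * entropy μ.1 - τ2 * entropy π)
        + Real.sqrt (∑ a, (q a - ∑ b, R a b * π b) ^ 2) - regVal τ1 τ2 R := by
  rw [sub_nonneg]
  set S := Real.sqrt (∑ a, (q a - ∑ b, R a b * π b) ^ 2) with hS
  have hSnn : 0 ≤ S := Real.sqrt_nonneg _
  -- key pointwise bound
  have key : ∀ μ : A1 → ℝ, μ ∈ stdSimplex ℝ A1 →
      pay R μ π ≤ (∑ a, μ a * q a) + S := by
    intro μ hμ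
    have hpay : pay R μ π = ∑ a, μ a * (∑ b, R a b * π b) := by
      unfold pay
      apply Finset.sum_congr rfl
      intro a _
      rw [Finset.mul_sum]
      apply Finset.sum_congr rfl
      intro b _
      ring
    rw [hpay]
    have habs : ∀ a, |(∑ b, R a b * π b) - q a| ≤ S := by
      intro a
      have h1 : ((∑ b, R a b * π b) - q a) ^ 2 ≤ ∑ a, (q a - ∑ b, R a b * π b) ^ 2 := by
        have := Finset.single_le_sum (f := fun a => (q a - ∑ b, R a b * π b) ^ 2)
          (fun a _ => sq_nonneg _) (Finset.mem_univ a)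
        calc ((∑ b, R a b * π b) - q a) ^ 2 = (q a - ∑ b, R a b * π b) ^ 2 := by ring
          _ ≤ _ := this
      calc |(∑ b, R a b * π b) - q a| = Real.sqrt (((∑ b, R a b * π b) - q a) ^ 2) :=
            (Real.sqrt_sq_eq_abs _).symm
        _ ≤ S := Real.sqrt_le_sqrt h1
    have hsum : ∑ a, μ a * (∑ b, R a b * π b) - ∑ a, μ a * q a ≤ S := by
      rw [← Finset.sum_sub_distrib]
      calc ∑ a, (μ a * (∑ b, R a b * π b) - μ a * q a)
          = ∑ a, μ a * ((∑ b, R a b * π b) - q a) := by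
            apply Finset.sum_congr rfl; intro a _; ring
        _ ≤ ∑ a, μ a * S := by
            apply Finset.sum_le_sum
            intro a _
            calc μ a * ((∑ b, R a b * π b) - q a) ≤ μ a * |(∑ b, R a b * π b) - q a| := by
                  exact mul_le_mul_of_nonneg_left (le_abs_self _) (hμ.1 a)
              _ ≤ μ a * S := mul_le_mul_of_nonneg_left (habs a) (hμ.1 a)
        _ = S := by rw [← Finset.sum_mul, hμ.2, one_mul]
    linarith
  -- bounded above of the sup on the RHS
  have hC : ∀ μ : stdSimplex ℝ A1,
      (∑ a, μ.1 a * q a) + τ1 * entropy μ.1 - τ2 * entropy π ≤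
      (∑ a, |q a|) + τ1 * Fintype.card A1 - τ2 * entropy π := by
    intro μ
    have h1 : ∑ a, μ.1 a * q a ≤ ∑ a, |q a| := by
      apply Finset.sum_le_sum
      intro a _
      calc μ.1 a * q a ≤ μ.1 a * |q a| := mul_le_mul_of_nonneg_left (le_abs_self _) (μ.2.1 a)
        _ ≤ 1 * |q a| := mul_le_mul_of_nonneg_right (aux_simplex_le_one μ.2 a) (abs_nonneg _)
        _ = |q a| := one_mul _
    have h2 : entropy μ.1 ≤ Fintype.card A1 := aux_entropy_le_card (fun a => μ.2.1 a)
    have h3 : τ1 * entropy μ.1 ≤ τ1 * Fintype.card A1 := mul_le_mul_of_nonneg_left h2 hτ1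
    linarith
  have hbddAbove : BddAbove (Set.range fun μ : stdSimplex ℝ A1 =>
      (∑ a, μ.1 a * q a) + τ1 * entropy μ.1 - τ2 * entropy π) :=
    ⟨_, by rintro x ⟨μ, rfl⟩; exact hC μ⟩
  -- now bound regVal
  unfold regVal
  apply ciSup_le
  intro μ
  -- the inf over ν is bounded below
  have hbddBelow : BddBelow (Set.range fun ν : stdSimplex ℝ A2 =>
      pay R μ.1 ν.1 + τ1 * entropy μ.1 - τ2 * entropy ν.1) := by
    refine ⟨(-∑ a, ∑ b, |R a b|) + τ1 * entropy μ.1 - τ2 * Fintype.card A2, ?_⟩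
    rintro x ⟨ν, rfl⟩
    have h1 := aux_pay_lb R μ.2 ν.2
    have h2 : entropy ν.1 ≤ Fintype.card A2 := aux_entropy_le_card (fun b => ν.2.1 b)
    have h3 : τ2 * entropy ν.1 ≤ τ2 * Fintype.card A2 := mul_le_mul_of_nonneg_left h2 hτ2
    simp only
    linarith
  calc (⨅ ν : stdSimplex ℝ A2, pay R μ.1 ν.1 + τ1 * entropy μ.1 - τ2 * entropy ν.1)
      ≤ pay R μ.1 π + τ1 * entropy μ.1 - τ2 * entropy π :=
        ciInf_le hbddBelow ⟨π, hπ⟩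
    _ ≤ ((∑ a, μ.1 a * q a) + S) + τ1 * entropy μ.1 - τ2 * entropy π := by
        have := key μ.1 μ.2
        linarith
    _ = ((∑ a, μ.1 a * q a) + τ1 * entropy μ.1 - τ2 * entropy π) + S := by ring
    _ ≤ (⨆ μ : stdSimplex ℝ A1, (∑ a, μ.1 a * q a) + τ1 * entropy μ.1 - τ2 * entropy π) + S := by
        gcongr
        exact le_ciSup hbddAbove μ
end

section
/- Let A¹ and A² be nonempty finite sets, R¹ ∈ ℝ^{A¹×A²}, R² ∈ ℝ^{A²×A¹}, τ¹, τ² ≥ 0, and set R̄ := R¹ + (R²)ᵀ. Define u¹(π¹, π²) := (π¹)ᵀR¹π² + τ¹H(π¹) − τ²H(π²) and u²(π², π¹) := (π²)ᵀR²π¹ + τ²H(π²) − τ¹H(π¹). Then for all π¹ ∈ Δ(A¹), π² ∈ Δ(A²) and all δ ∈ ℝ, if u¹(π¹, π²) − val̄¹(R¹) ≤ δ, then u²(π², π¹) − val̄²(R²) ≥ −δ − 2‖R̄‖_max. -/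
open Finset

lemma abs_pay_le {A B : Type*} [Fintype A] [Fintype B] [Nonempty A] [Nonempty B]
    (R : A → B → ℝ) {μ : A → ℝ} {ν : B → ℝ}
    (hμ : μ ∈ stdSimplex ℝ A) (hν : ν ∈ stdSimplex ℝ B) :
    |pay R μ ν| ≤ matMaxNorm R := by
  have key : ∀ a b, |μ a * R a b * ν b| ≤ μ a * ν b * matMaxNorm R := by
    intro a b
    rw [abs_mul, abs_mul, abs_of_nonneg (hμ.1 a), abs_of_nonneg (hν.1 b)]
    have h1 : |R a b| ≤ matMaxNorm R :=
      Finset.le_sup' (fun ab : A × B => |R ab.1 ab.2|) (Finset.mem_univ (a, b))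
    calc μ a * |R a b| * ν b = μ a * ν b * |R a b| := by ring
      _ ≤ μ a * ν b * matMaxNorm R :=
        mul_le_mul_of_nonneg_left h1 (mul_nonneg (hμ.1 a) (hν.1 b))
  calc |pay R μ ν| ≤ ∑ a, ∑ b, |μ a * R a b * ν b| := by
        refine (Finset.abs_sum_le_sum_abs _ _).trans ?_
        exact Finset.sum_le_sum fun a _ => Finset.abs_sum_le_sum_abs _ _
    _ ≤ ∑ a, ∑ b, μ a * ν b * matMaxNorm R :=
        Finset.sum_le_sum fun a _ => Finset.sum_le_sum fun b _ => key a b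
    _ = matMaxNorm R := by
        simp only [← Finset.sum_mul, ← Finset.mul_sum]
        rw [hν.2, hμ.2]; ring

lemma entropy_nonneg' {A : Type*} [Fintype A] {μ : A → ℝ} (hμ : μ ∈ stdSimplex ℝ A) :
    0 ≤ entropy μ := by
  unfold entropy
  rw [neg_nonneg]
  apply Finset.sum_nonpos
  intro a _
  rcases eq_or_lt_of_le (hμ.1 a) with h0 | h0
  · simp [← h0]
  · have hle : μ a ≤ 1 := by
      rw [← hμ.2]
      exact Finset.single_le_sum (fun b _ => hμ.1 b) (Finset.mem_univ a)
    exact mul_nonpos_of_nonneg_of_nonpos (le_of_lt h0) (Real.log_nonpos (le_of_lt h0) hle)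

lemma entropy_le_card {A : Type*} [Fintype A] {μ : A → ℝ} (hμ : μ ∈ stdSimplex ℝ A) :
    entropy μ ≤ Fintype.card A := by
  unfold entropy
  have key : ∀ a, -(μ a * Real.log (μ a)) ≤ 1 := by
    intro a
    rcases eq_or_lt_of_le (hμ.1 a) with h0 | h0
    · simp [← h0]
    · have hlog : Real.log (μ a)⁻¹ ≤ (μ a)⁻¹ - 1 :=
        Real.log_le_sub_one_of_pos (inv_pos.mpr h0)
      rw [Real.log_inv] at hlog
      have := mul_le_mul_of_nonneg_left hlog (le_of_lt h0)
      calc -(μ a * Real.log (μ a)) = μ a * -Real.log (μ a) := by ring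
        _ ≤ μ a * ((μ a)⁻¹ - 1) := this
        _ = 1 - μ a := by field_simp
        _ ≤ 1 := by linarith [hμ.1 a]
  calc -∑ a, μ a * Real.log (μ a) = ∑ a, -(μ a * Real.log (μ a)) := by
        rw [← Finset.sum_neg_distrib]
    _ ≤ ∑ _a : A, (1 : ℝ) := Finset.sum_le_sum fun a _ => key a
    _ = Fintype.card A := by simp

lemma regObj_bddBelow {A B : Type*} [Fintype A] [Fintype B] [Nonempty A] [Nonempty B]
    (τ1 τ2 : ℝ) (hτ1 : 0 ≤ τ1) (hτ2 : 0 ≤ τ2) (R : A → B → ℝ) (μ : stdSimplex ℝ A) :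
    BddBelow (Set.range fun ν : stdSimplex ℝ B =>
      pay R μ.1 ν.1 + τ1 * entropy μ.1 - τ2 * entropy ν.1) := by
  refine ⟨-matMaxNorm R + τ1 * 0 - τ2 * Fintype.card B, ?_⟩
  rintro x ⟨ν, rfl⟩
  dsimp only
  have h1 := abs_pay_le R μ.2 ν.2
  have h2 := entropy_nonneg' μ.2
  have h3 := entropy_le_card ν.2
  have h4 : -matMaxNorm R ≤ pay R μ.1 ν.1 := neg_le_of_abs_le h1
  have h5 : τ2 * entropy ν.1 ≤ τ2 * Fintype.card B := mul_le_mul_of_nonneg_left h3 hτ2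
  have h6 : τ1 * 0 ≤ τ1 * entropy μ.1 := mul_le_mul_of_nonneg_left h2 hτ1
  linarith

/-- `pay R̄ π1 π2 = pay R1 π1 π2 + pay R2 π2 π1`. -/
lemma pay_add_swap {A1 A2 : Type*} [Fintype A1] [Fintype A2]
    (R1 : A1 → A2 → ℝ) (R2 : A2 → A1 → ℝ) (π1 : A1 → ℝ) (π2 : A2 → ℝ) :
    pay (fun a b => R1 a b + R2 b a) π1 π2 = pay R1 π1 π2 + pay R2 π2 π1 := by
  unfold pay
  have hsw : ∑ a : A2, ∑ b : A1, π2 a * R2 a b * π1 b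
      = ∑ b : A1, ∑ a : A2, π2 a * R2 a b * π1 b := Finset.sum_comm
  rw [hsw, ← Finset.sum_add_distrib]
  refine Finset.sum_congr rfl fun a _ => ?_
  rw [← Finset.sum_add_distrib]
  refine Finset.sum_congr rfl fun b _ => ?_
  ring

lemma regVal_add_le {A1 A2 : Type*} [Fintype A1] [Fintype A2] [Nonempty A1] [Nonempty A2]
    (R1 : A1 → A2 → ℝ) (R2 : A2 → A1 → ℝ) (τ1 τ2 : ℝ) (hτ1 : 0 ≤ τ1) (hτ2 : 0 ≤ τ2) :
    regVal τ2 τ1 R2 ≤ matMaxNorm (fun a b => R1 a b + R2 b a) - regVal τ1 τ2 R1 := by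
  set C := matMaxNorm (fun a b => R1 a b + R2 b a) with hC
  apply ciSup_le
  intro ν
  rw [show (⨅ μ : stdSimplex ℝ A1, pay R2 ν.1 μ.1 + τ2 * entropy ν.1 - τ1 * entropy μ.1)
      ≤ C - regVal τ1 τ2 R1 ↔ regVal τ1 τ2 R1 ≤ C -
      (⨅ μ : stdSimplex ℝ A1, pay R2 ν.1 μ.1 + τ2 * entropy ν.1 - τ1 * entropy μ.1)
    from ⟨fun h => by linarith, fun h => by linarith⟩]
  apply ciSup_le
  intro μ
  have hinf1 : (⨅ ν' : stdSimplex ℝ A2,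
      pay R1 μ.1 ν'.1 + τ1 * entropy μ.1 - τ2 * entropy ν'.1) ≤
      pay R1 μ.1 ν.1 + τ1 * entropy μ.1 - τ2 * entropy ν.1 :=
    ciInf_le (regObj_bddBelow τ1 τ2 hτ1 hτ2 R1 μ) ν
  have hinf2 : (⨅ μ' : stdSimplex ℝ A1,
      pay R2 ν.1 μ'.1 + τ2 * entropy ν.1 - τ1 * entropy μ'.1) ≤
      pay R2 ν.1 μ.1 + τ2 * entropy ν.1 - τ1 * entropy μ.1 :=
    ciInf_le (regObj_bddBelow τ2 τ1 hτ2 hτ1 R2 ν) μ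
  have hpay : pay R1 μ.1 ν.1 + pay R2 ν.1 μ.1 ≤ C := by
    have := abs_pay_le (fun a b => R1 a b + R2 b a) μ.2 ν.2
    rw [pay_add_swap R1 R2 μ.1 ν.1] at this
    exact le_of_abs_le this
  linarith

theorem stmt_10 {A1 A2 : Type*} [Fintype A1] [Fintype A2] [Nonempty A1] [Nonempty A2]
    (R1 : A1 → A2 → ℝ) (R2 : A2 → A1 → ℝ) (τ1 τ2 : ℝ) (hτ1 : 0 ≤ τ1) (hτ2 : 0 ≤ τ2)
    (π1 : A1 → ℝ) (π2 : A2 → ℝ) (hπ1 : π1 ∈ stdSimplex ℝ A1) (hπ2 : π2 ∈ stdSimplex ℝ A2)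
    (δ : ℝ)
    (h : pay R1 π1 π2 + τ1 * entropy π1 - τ2 * entropy π2 - regVal τ1 τ2 R1 ≤ δ) :
    -δ - 2 * matMaxNorm (fun a b => R1 a b + R2 b a) ≤
      pay R2 π2 π1 + τ2 * entropy π2 - τ1 * entropy π1 - regVal τ2 τ1 R2 := by
  set C := matMaxNorm (fun a b => R1 a b + R2 b a) with hC
  have hval := regVal_add_le R1 R2 τ1 τ2 hτ1 hτ2
  have hpay : -C ≤ pay R1 π1 π2 + pay R2 π2 π1 := by
    have := abs_pay_le (fun a b => R1 a b + R2 b a) hπ1 hπ2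
    rw [pay_add_swap R1 R2 π1 π2] at this
    exact neg_le_of_abs_le this
  linarith
end

section
/- Let n ≥ 1 and consider a sequence of vectors y_k ∈ ℝ^n, k = 0, 1, 2, …, step sizes β_k(m) ∈ [0,1], error sequences e_k(m) ∈ ℝ, constants γ ∈ (0,1), c ≥ 0, and M ≥ 0, such that for every coordinate m and every k: (i) y_{k+1}(m) ≥ (1 − β_k(m))·y_k(m) + β_k(m)·( γ·min_{m'} y_k(m') − e_k(m) ); (ii) Σ_{k=0}^∞ β_k(m) = ∞; (iii) e_k(m) → c as k → ∞; and (iv) y_k(m) ≥ −M for all k and m. Then liminf_{k→∞} y_k(m) ≥ −c/(1−γ) for every coordinate m. -/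
/-!
Call `a` an eventual lower bound if eventually `a ≤ y k m` for all `m`. If `a` is one, then
for every `d < γ a - c` each coordinate eventually satisfies the relaxation inequality
`y (k+1) m ≥ (1 - β k m) y k m + β k m d`. Since `∑ β = ∞` forces `∏ (1 - β) → 0`, the
relaxation forgets its initial value, so every `b < d`, hence every `b < γ a - c`, is again an
eventual lower bound. Starting from `-M`, the contraction `a ↦ γ a - c` pushes the eventual
lower bounds up to its fixed point `-c / (1 - γ)`.
-/

open Finset

open Filter Topology

lemma prod_Ico_mul_le_of_mul_le_succ {a u : ℕ → ℝ} {K : ℕ} (ha : ∀ k ≥ K, 0 ≤ a k)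
    (h : ∀ k ≥ K, a k * u k ≤ u (k + 1)) {n : ℕ} (hn : K ≤ n) :
    (∏ j ∈ Ico K n, a j) * u K ≤ u n := by
  induction n, hn using Nat.le_induction with
  | base => simp
  | succ n hKn ih =>
    rw [prod_Ico_succ_top hKn, mul_comm _ (a n), mul_assoc]
    exact (mul_le_mul_of_nonneg_left ih (ha n hKn)).trans (h n hKn)

lemma tendsto_prod_Ico_one_sub_of_tendsto_sum {b : ℕ → ℝ} (hb : ∀ k, b k ≤ 1) (K : ℕ)
    (hdiv : Tendsto (fun n => ∑ k ∈ range n, b k) atTop atTop) :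
    Tendsto (fun n => ∏ j ∈ Ico K n, (1 - b j)) atTop (𝓝 0) := by
  have htail : Tendsto (fun n => ∑ j ∈ Ico K n, b j) atTop atTop := by
    refine (tendsto_atTop_add_const_right _ (-∑ j ∈ range K, b j) hdiv).congr' ?_
    filter_upwards [eventually_ge_atTop K] with n hn
    rw [sum_Ico_eq_sub _ hn, sub_eq_add_neg]
  have hexp : Tendsto (fun n => Real.exp (-∑ j ∈ Ico K n, b j)) atTop (𝓝 0) :=
    Real.tendsto_exp_atBot.comp (tendsto_neg_atTop_atBot.comp htail)
  refine squeeze_zero (fun n => prod_nonneg fun j _ => sub_nonneg.2 (hb j)) (fun n => ?_) hexp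
  calc ∏ j ∈ Ico K n, (1 - b j) ≤ ∏ j ∈ Ico K n, Real.exp (-b j) :=
        prod_le_prod (fun j _ => sub_nonneg.2 (hb j)) fun j _ => by
          linarith [Real.add_one_le_exp (-b j)]
    _ = Real.exp (-∑ j ∈ Ico K n, b j) := by rw [← Real.exp_sum, sum_neg_distrib]

lemma forall_lt_eventually_le_of_relaxation {x b : ℕ → ℝ} {d : ℝ} (hb : ∀ k, b k ≤ 1)
    (hdiv : Tendsto (fun n => ∑ k ∈ range n, b k) atTop atTop)
    (hrec : ∀ᶠ k in atTop, (1 - b k) * x k + b k * d ≤ x (k + 1)) :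
    ∀ d' < d, ∀ᶠ k in atTop, d' ≤ x k := by
  intro d' hd'
  obtain ⟨K, hK⟩ := hrec.exists_forall_of_atTop
  set u : ℕ → ℝ := fun k => min (x k - d) 0
  have hstep : ∀ k ≥ K, (1 - b k) * u k ≤ u (k + 1) := fun k hk => by
    have hbk : 0 ≤ 1 - b k := sub_nonneg.2 (hb k)
    refine le_min ?_ (mul_nonpos_of_nonneg_of_nonpos hbk (min_le_right _ _))
    linarith [mul_le_mul_of_nonneg_left (min_le_left (x k - d) 0) hbk, hK k hk]
  have hlim : Tendsto (fun n => (∏ j ∈ Ico K n, (1 - b j)) * u K) atTop (𝓝 0) := by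
    simpa using (tendsto_prod_Ico_one_sub_of_tendsto_sum hb K hdiv).mul_const (u K)
  filter_upwards [hlim.eventually (eventually_gt_nhds (sub_neg.2 hd')),
    eventually_ge_atTop K] with n hn hKn
  have := prod_Ico_mul_le_of_mul_le_succ (fun k _ => sub_nonneg.2 (hb k)) hstep hKn
  linarith [min_le_left (x n - d) 0]

lemma forall_lt_eventually_forall_le_of_eventually_forall_le {I : Type*} [Fintype I]
    [Nonempty I] {y β e : ℕ → I → ℝ} {γ c a : ℝ} (hγ : 0 ≤ γ)
    (hβ : ∀ k m, β k m ∈ Set.Icc (0 : ℝ) 1)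
    (hrec : ∀ k m,
      (1 - β k m) * y k m +
          β k m * (γ * univ.inf' univ_nonempty (fun m' => y k m') - e k m) ≤
        y (k + 1) m)
    (hβdiv : ∀ m, Tendsto (fun n => ∑ k ∈ range n, β k m) atTop atTop)
    (he : ∀ m, Tendsto (fun k => e k m) atTop (𝓝 c))
    (ha : ∀ᶠ k in atTop, ∀ m, a ≤ y k m) :
    ∀ b < γ * a - c, ∀ᶠ k in atTop, ∀ m, b ≤ y k m := by
  intro b hb
  obtain ⟨d, hbd, hd⟩ := exists_between hb
  refine eventually_all.2 fun m =>
    forall_lt_eventually_le_of_relaxation (fun k => (hβ k m).2) (hβdiv m) ?_ b hbd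
  have hce : c < γ * a - d := by linarith
  filter_upwards [ha, (he m).eventually (eventually_lt_nhds hce)] with k hak hek
  have hinf : a ≤ univ.inf' univ_nonempty (fun m' => y k m') :=
    le_inf' _ _ fun m' _ => hak m'
  calc (1 - β k m) * y k m + β k m * d
      ≤ (1 - β k m) * y k m +
          β k m * (γ * univ.inf' univ_nonempty (fun m' => y k m') - e k m) := by
        gcongr
        · exact (hβ k m).1
        · linarith [mul_le_mul_of_nonneg_left hinf hγ]
    _ ≤ y (k + 1) m := hrec k m

lemma forall_lt_of_forall_lt_mul_sub {P : ℝ → Prop} {γ c a₀ : ℝ} (hγ₀ : 0 ≤ γ) (hγ₁ : γ < 1)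
    (hP : Antitone P) (h₀ : P a₀) (hstep : ∀ a, P a → ∀ b < γ * a - c, P b) :
    ∀ b < -(c / (1 - γ)), P b := by
  by_contra! ⟨a, haL, hna⟩
  have hub : ∀ b ∈ {b | P b}, b ≤ a := fun b hb => not_lt.1 fun hab => hna (hP hab.le hb)
  set l := sSup {b | P b}
  have hla : l ≤ a := csSup_le ⟨a₀, h₀⟩ hub
  -- below the fixed point `γ l - c > l`, so one step from just below `l` overshoots `l`
  have hgap : 0 < γ * l - c - l := by
    have : l < -(c / (1 - γ)) := hla.trans_lt haL
    rw [lt_neg, div_lt_iff₀ (by linarith)] at this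
    nlinarith
  obtain ⟨b, hb, hlb⟩ := exists_lt_of_lt_csSup ⟨a₀, h₀⟩
    (by linarith : l - (γ * l - c - l) / 2 < l)
  obtain ⟨b', hlb', hb'⟩ :=
    exists_between (by nlinarith [mul_le_mul_of_nonneg_left hlb.le hγ₀] : l < γ * b - c)
  linarith [le_csSup ⟨a, hub⟩ (hstep b hb b' hb')]

/-- The hypothesis `L ≤ 0` covers sequences unbounded above, whose `liminf` in `ℝ` is `0`. -/
lemma le_liminf_of_forall_lt_of_nonpos {α : Type*} {f : Filter α} {u : α → ℝ} {L : ℝ}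
    (hL : L ≤ 0) (h : ∀ a < L, ∀ᶠ n in f, a ≤ u n) : L ≤ liminf u f := by
  rw [liminf_eq]
  by_cases hb : BddAbove {a | ∀ᶠ n in f, a ≤ u n}
  · refine le_of_forall_lt fun a ha => ?_
    obtain ⟨a', haa', ha'L⟩ := exists_between ha
    exact haa'.trans_le (le_csSup hb (h a' ha'L))
  · rwa [Real.sSup_of_not_bddAbove hb]

theorem stmt_11_general {I : Type*} [Fintype I] [Nonempty I]
    (y : ℕ → I → ℝ) (β : ℕ → I → ℝ) (e : ℕ → I → ℝ)
    (γ c M : ℝ) (hγ : γ ∈ Set.Ioo (0 : ℝ) 1) (hc : 0 ≤ c)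
    (hβ : ∀ k m, β k m ∈ Set.Icc (0 : ℝ) 1)
    (hrec : ∀ k m,
      (1 - β k m) * y k m +
          β k m * (γ * Finset.univ.inf' univ_nonempty (fun m' => y k m') - e k m) ≤
        y (k + 1) m)
    (hβdiv : ∀ m, Filter.Tendsto (fun n => ∑ k ∈ Finset.range n, β k m)
        Filter.atTop Filter.atTop)
    (he : ∀ m, Filter.Tendsto (fun k => e k m) Filter.atTop (nhds c))
    (hbdd : ∀ k m, -M ≤ y k m) :
    ∀ m, -(c / (1 - γ)) ≤ Filter.liminf (fun k => y k m) Filter.atTop := by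
  have hbounds : ∀ b < -(c / (1 - γ)), ∀ᶠ k in atTop, ∀ m, b ≤ y k m :=
    forall_lt_of_forall_lt_mul_sub (P := fun a => ∀ᶠ k in atTop, ∀ m, a ≤ y k m)
      hγ.1.le hγ.2 (fun _ _ hab hb => hb.mono fun _ hk m => hab.trans (hk m))
      (Eventually.of_forall hbdd) fun _ ha =>
        forall_lt_eventually_forall_le_of_eventually_forall_le hγ.1.le hβ hrec hβdiv he ha
  have hL : -(c / (1 - γ)) ≤ 0 := neg_nonpos.2 (div_nonneg hc (sub_nonneg.2 hγ.2.le))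
  exact fun m =>
    le_liminf_of_forall_lt_of_nonpos hL fun b hb => (hbounds b hb).mono fun _ hk => hk m

theorem stmt_11 {I : Type*} [Fintype I] [Nonempty I]
    (y : ℕ → I → ℝ) (β : ℕ → I → ℝ) (e : ℕ → I → ℝ)
    (γ c M : ℝ) (hγ : γ ∈ Set.Ioo (0 : ℝ) 1) (hc : 0 ≤ c) (hM : 0 ≤ M)
    (hβ : ∀ k m, β k m ∈ Set.Icc (0 : ℝ) 1)
    (hrec : ∀ k m,
      (1 - β k m) * y k m +
          β k m * (γ * Finset.univ.inf' univ_nonempty (fun m' => y k m') - e k m) ≤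
        y (k + 1) m)
    (hβdiv : ∀ m, Filter.Tendsto (fun n => ∑ k ∈ Finset.range n, β k m)
        Filter.atTop Filter.atTop)
    (he : ∀ m, Filter.Tendsto (fun k => e k m) Filter.atTop (nhds c))
    (hbdd : ∀ k m, -M ≤ y k m) :
    ∀ m, -(c / (1 - γ)) ≤ Filter.liminf (fun k => y k m) Filter.atTop :=
  stmt_11_general y β e γ c M hγ hc hβ hrec hβdiv he hbdd
end
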